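/- arXiv:math/0603590 — 4 statements merged into one kernel-verified Lean document; each statement's English description precedes it below -/
import Mathlib

section
/- Let A and B be antisymmetric tensored Ω-categories with both underlying preorders partial orders, and f : A → B an Ω-functor. If the underlying monotone map f : A₀ → B₀ has a right adjoint (a Galois connection) and f preserves tensors, f(α ⊗ x) = α ⊗ f(x), then f has a right adjoint as an Ω-functor: there exists g : B → A with B(f(a), b) = A(a, g(b)) for all a, b. -/
/-- A commutative unital quantale: a complete lattice with a commutative
monoid structure whose multiplication distributes over arbitrary joins. -/
class CommQuantale (Q : Type*) extends CompleteLattice Q, CommMonoid Q where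
  mul_sSup : ∀ (a : Q) (s : Set Q), a * sSup s = ⨆ b ∈ s, a * b

/-- The residuation `a → b = ⋁ {c | a * c ≤ b}`. -/
def qres {Q : Type*} [CommQuantale Q] (a b : Q) : Q := sSup {c | a * c ≤ b}

lemma qres_le_iff {Q : Type*} [CommQuantale Q] {a b c : Q} :
    c ≤ qres a b ↔ a * c ≤ b := by
  constructor
  · intro h
    have hmul : a * qres a b ≤ b := by
      rw [qres, CommQuantale.mul_sSup]
      exact iSup₂_le fun x hx => hx
    calc a * c ≤ a * qres a b := by
          have : a * qres a b = a * sSup {c, qres a b} := by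
            rw [sSup_pair, sup_eq_right.mpr h]
          rw [this, CommQuantale.mul_sSup]
          exact le_iSup₂_of_le c (Set.mem_insert _ _) le_rfl
      _ ≤ b := hmul
  · intro h
    exact le_sSup h

/-- If the underlying monotone map of an Ω-functor between antisymmetric tensored
Ω-categories has a right adjoint (a Galois connection) and f preserves tensors,
then f has a right adjoint as an Ω-functor. -/
theorem galois_and_tensor_preserving_implies_adjoint {Q : Type*} [CommQuantale Q]
    {A B : Type*} (homA : A → A → Q) (homB : B → B → Q)
    (hreflA : ∀ a : A, (1 : Q) ≤ homA a a)
    (htransA : ∀ a b c : A, homA a b * homA b c ≤ homA a c)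
    (hreflB : ∀ a : B, (1 : Q) ≤ homB a a)
    (htransB : ∀ a b c : B, homB a b * homB b c ≤ homB a c)
    (hantiA : ∀ a b : A, (1 : Q) ≤ homA a b → (1 : Q) ≤ homA b a → a = b)
    (hantiB : ∀ a b : B, (1 : Q) ≤ homB a b → (1 : Q) ≤ homB b a → a = b)
    (tenA : Q → A → A) (tenB : Q → B → B)
    (htenA : ∀ (α : Q) (x y : A), homA (tenA α x) y = qres α (homA x y))
    (htenB : ∀ (α : Q) (x y : B), homB (tenB α x) y = qres α (homB x y))
    (f : A → B) (hf : ∀ a b : A, homA a b ≤ homB (f a) (f b))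
    (g0 : B → A)
    (hgal : ∀ (a : A) (b : B), (1 : Q) ≤ homB (f a) b ↔ (1 : Q) ≤ homA a (g0 b))
    (hften : ∀ (α : Q) (x : A), f (tenA α x) = tenB α (f x)) :
    ∃ g : B → A, ∀ (a : A) (b : B), homB (f a) b = homA a (g b) := by
  refine ⟨g0, fun a b => le_antisymm ?_ ?_⟩
  · -- homB (f a) b ≤ homA a (g0 b)
    set α := homB (f a) b with hα
    have h1 : (1 : Q) ≤ homB (f (tenA α a)) b := by
      rw [hften, htenB]
      rw [qres_le_iff, mul_one]
    have h2 : (1 : Q) ≤ homA (tenA α a) (g0 b) := (hgal _ _).mp h1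
    rw [htenA, qres_le_iff, mul_one] at h2
    exact h2
  · -- homA a (g0 b) ≤ homB (f a) b
    set β := homA a (g0 b) with hβ
    have h1 : (1 : Q) ≤ homA (tenA β a) (g0 b) := by
      rw [htenA, qres_le_iff, mul_one]
    have h2 : (1 : Q) ≤ homB (f (tenA β a)) b := (hgal _ _).mpr h1
    rw [hften, htenB, qres_le_iff, mul_one] at h2
    exact h2
end

section
/- For a commutative unital quantale Ω viewed as an Ω-category via Ω(α,β) = α → β, every Ω-functor φ : Ωᵒᵖ → Ω satisfies sup φ := ⋁_{x∈Ω} x * φ(x) = φ(I), and the map x ↦ Downarrow(x) given by Downarrow(x)(t) = x * (t → I) is a left adjoint to sup: for all φ ∈ [Ωᵒᵖ, Ω] and x ∈ Ω, ⋀_{t∈Ω} ((x * (t → I)) → φ(t)) = x → φ(I). Hence the Ω-category Ω is completely distributive. -/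
namespace CQAux

variable {Q : Type*} [CommQuantale Q]

lemma sSup_Iic' (c : Q) : sSup (Set.Iic c) = c :=
  le_antisymm (sSup_le fun _ hx => hx) (le_sSup le_rfl)

lemma mul_mono_right {a b c : Q} (h : b ≤ c) : a * b ≤ a * c := by
  calc a * b ≤ ⨆ x ∈ Set.Iic c, a * x := le_iSup₂ (f := fun x (_ : x ∈ Set.Iic c) => a * x) b h
    _ = a * sSup (Set.Iic c) := (CommQuantale.mul_sSup a _).symm
    _ = a * c := by rw [sSup_Iic']

lemma mul_qres_le (a b : Q) : a * qres a b ≤ b := by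
  rw [qres, CommQuantale.mul_sSup]
  exact iSup₂_le fun c hc => hc

lemma le_qres_iff {a b c : Q} : c ≤ qres a b ↔ a * c ≤ b := by
  constructor
  · intro h
    exact le_trans (mul_mono_right h) (mul_qres_le a b)
  · intro h
    exact le_sSup h

lemma qres_one (a : Q) : qres 1 a = a := by
  apply le_antisymm
  · simpa using mul_qres_le 1 a
  · exact le_qres_iff.2 (by simp)

end CQAux

/-- For the Ω-category Ω itself: every presheaf φ ∈ [Ωᵒᵖ, Ω] has supremum φ(1),
and Downarrow(x)(t) = x * (t → 1) defines a left adjoint of sup; hence Ω is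
completely distributive. -/
theorem quantale_completely_distributive {Q : Type*} [CommQuantale Q] :
    ∀ φ : Q → Q, (∀ a b : Q, qres b a ≤ qres (φ a) (φ b)) →
      ((⨆ x : Q, x * φ x) = φ 1 ∧
       ∀ x : Q, (⨅ t : Q, qres (x * qres t 1) (φ t)) = qres x (φ 1)) := by
  intro φ hφ
  open CQAux in
  have key : ∀ x : Q, x * φ x ≤ φ 1 := by
    intro x
    have h1 : x ≤ qres (φ x) (φ 1) := by
      have := hφ x 1
      rwa [qres_one] at this
    calc x * φ x = φ x * x := mul_comm _ _
      _ ≤ φ x * qres (φ x) (φ 1) := CQAux.mul_mono_right h1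
      _ ≤ φ 1 := CQAux.mul_qres_le _ _
  constructor
  · apply le_antisymm
    · exact iSup_le key
    · calc φ 1 = 1 * φ 1 := (one_mul _).symm
        _ ≤ ⨆ x : Q, x * φ x := le_iSup (fun x : Q => x * φ x) 1
  · intro x
    apply le_antisymm
    · calc (⨅ t : Q, qres (x * qres t 1) (φ t)) ≤ qres (x * qres 1 1) (φ 1) :=
            iInf_le _ 1
        _ = qres x (φ 1) := by rw [CQAux.qres_one, mul_one]
    · apply le_iInf
      intro t
      rw [CQAux.le_qres_iff]
      have h2 : qres t 1 * φ 1 ≤ φ t := by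
        have h := hφ 1 t
        rw [mul_comm]
        calc φ 1 * qres t 1 ≤ φ 1 * qres (φ 1) (φ t) := CQAux.mul_mono_right h
          _ ≤ φ t := CQAux.mul_qres_le _ _
      calc x * qres t 1 * qres x (φ 1)
          = qres t 1 * (x * qres x (φ 1)) := by
            rw [mul_comm x (qres t 1), mul_assoc]
        _ ≤ qres t 1 * φ 1 := CQAux.mul_mono_right (CQAux.mul_qres_le _ _)
        _ ≤ φ t := h2
end

section
/- Interpolation of the totally below relation: Let A be a completely distributive Ω-lattice with Downarrow : A → [Aᵒᵖ, Ω] the left adjoint of sup : [Aᵒᵖ, Ω] → A. Then for all x, y ∈ A, Downarrow(x)(y) = ⋁_{z∈A} (Downarrow(x)(z) * Downarrow(z)(y)). -/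
section QuantaleLemmas

variable {Q : Type*} [CommQuantale Q]

lemma qmul_qres_le (a b : Q) : a * qres a b ≤ b := by
  rw [qres, CommQuantale.mul_sSup]
  exact iSup₂_le fun c hc => hc

lemma le_qres_iff {a b c : Q} : c ≤ qres a b ↔ a * c ≤ b := by
  constructor
  · intro h
    calc a * c ≤ a * qres a b := by
          rw [show qres a b = sSup {c, qres a b} from
            (sSup_pair.trans (sup_eq_right.mpr h)).symm, CommQuantale.mul_sSup]
          exact le_iSup₂_of_le c (Or.inl rfl) le_rfl
      _ ≤ b := qmul_qres_le a b
  · intro h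
    exact le_sSup h

lemma qmul_mono_right {c d : Q} (a : Q) (h : c ≤ d) : a * c ≤ a * d := by
  rw [show d = sSup {c, d} from (sSup_pair.trans (sup_eq_right.mpr h)).symm,
    CommQuantale.mul_sSup]
  exact le_iSup₂_of_le c (Or.inl rfl) le_rfl

lemma qmul_mono_left {c d : Q} (a : Q) (h : c ≤ d) : c * a ≤ d * a := by
  rw [mul_comm c a, mul_comm d a]; exact qmul_mono_right a h

lemma le_of_one_le_qres {a b : Q} (h : (1 : Q) ≤ qres a b) : a ≤ b :=
  calc a = a * 1 := (mul_one a).symm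
    _ ≤ a * qres a b := qmul_mono_right a h
    _ ≤ b := qmul_qres_le a b

lemma qres_mul (a b c : Q) : qres (a * b) c = qres a (qres b c) := by
  apply le_antisymm
  · rw [le_qres_iff, le_qres_iff]
    calc b * (a * qres (a * b) c) = a * b * qres (a * b) c := by
          rw [← mul_assoc, mul_comm b a]
      _ ≤ c := qmul_qres_le _ _
  · rw [le_qres_iff]
    calc a * b * qres a (qres b c) = b * (a * qres a (qres b c)) := by
          rw [← mul_assoc, mul_comm a b]
      _ ≤ b * qres b c := qmul_mono_right b (qmul_qres_le _ _)
      _ ≤ c := qmul_qres_le _ _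

lemma qmul_iSup {ι : Type*} (a : Q) (f : ι → Q) : a * (⨆ i, f i) = ⨆ i, a * f i := by
  rw [iSup, CommQuantale.mul_sSup]
  apply le_antisymm
  · exact iSup₂_le fun b hb => by
      obtain ⟨i, rfl⟩ := hb
      exact le_iSup (fun i => a * f i) i
  · exact iSup_le fun i => le_iSup₂_of_le (f i) ⟨i, rfl⟩ le_rfl

lemma qiSup_mul {ι : Type*} (a : Q) (f : ι → Q) : (⨆ i, f i) * a = ⨆ i, f i * a := by
  rw [mul_comm, qmul_iSup]
  simp [mul_comm]

lemma qres_iSup {ι : Type*} (f : ι → Q) (c : Q) :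
    qres (⨆ i, f i) c = ⨅ i, qres (f i) c := by
  apply le_antisymm
  · exact le_iInf fun i => by
      rw [le_qres_iff]
      calc f i * qres (⨆ i, f i) c ≤ (⨆ i, f i) * qres (⨆ i, f i) c :=
            qmul_mono_left _ (le_iSup f i)
        _ ≤ c := qmul_qres_le _ _
  · rw [le_qres_iff, qiSup_mul]
    exact iSup_le fun i => le_qres_iff.mp (iInf_le _ i)

lemma qres_iInf {ι : Type*} (a : Q) (f : ι → Q) :
    qres a (⨅ i, f i) = ⨅ i, qres a (f i) := by
  apply le_antisymm
  · exact le_iInf fun i => by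
      rw [le_qres_iff]
      exact (qmul_qres_le _ _).trans (iInf_le f i)
  · rw [le_qres_iff, le_iInf_iff]
    exact fun i => (qmul_mono_right a (iInf_le _ i)).trans (qmul_qres_le _ _)

end QuantaleLemmas

/-- The totally below relation of a completely distributive Ω-lattice interpolates. -/
theorem totally_below_interpolates {Q : Type*} [CommQuantale Q]
    {A : Type*} (hom : A → A → Q)
    (hrefl : ∀ a : A, (1 : Q) ≤ hom a a)
    (htrans : ∀ a b c : A, hom a b * hom b c ≤ hom a c)
    (hanti : ∀ a b : A, (1 : Q) ≤ hom a b → (1 : Q) ≤ hom b a → a = b)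
    -- lower Ω-subsets: elements of [Aᵒᵖ, Ω]
    (IsLow : (A → Q) → Prop)
    (hIsLow : ∀ φ : A → Q, IsLow φ ↔ ∀ a b : A, hom b a ≤ qres (φ a) (φ b))
    -- sup : [Aᵒᵖ, Ω] → A, a left adjoint of the Yoneda embedding
    (Sup' : (A → Q) → A)
    (hSup : ∀ φ : A → Q, IsLow φ →
      ∀ x : A, (⨅ z : A, qres (φ z) (hom z x)) = hom (Sup' φ) x)
    -- Downarrow : A → [Aᵒᵖ, Ω], a left adjoint of sup
    (D : A → A → Q)
    (hDlow : ∀ a : A, IsLow (D a))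
    (hDadj : ∀ (a : A) (φ : A → Q), IsLow φ →
      (⨅ z : A, qres (D a z) (φ z)) = hom a (Sup' φ)) :
    ∀ x y : A, D x y = ⨆ z : A, D x z * D z y := by
  -- Yoneda presheaves are lower
  have hylow : ∀ a : A, IsLow (fun w => hom w a) := by
    intro a
    rw [hIsLow]
    intro u v
    rw [le_qres_iff]
    calc hom u a * hom v u = hom v u * hom u a := mul_comm _ _
      _ ≤ hom v a := htrans v u a
  -- sup (y a) = a
  have hsupy_hom : ∀ a t : A, hom (Sup' (fun w => hom w a)) t = hom a t := by
    intro a t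
    rw [← hSup _ (hylow a)]
    apply le_antisymm
    · refine (iInf_le _ a).trans ?_
      calc qres (hom a a) (hom a t) = 1 * qres (hom a a) (hom a t) := (one_mul _).symm
        _ ≤ hom a a * qres (hom a a) (hom a t) := qmul_mono_left _ (hrefl a)
        _ ≤ hom a t := qmul_qres_le _ _
    · exact le_iInf fun z => le_qres_iff.mpr (htrans z a t)
  have hsupy : ∀ a : A, Sup' (fun w => hom w a) = a := by
    intro a
    apply hanti
    · rw [hsupy_hom a a]; exact hrefl a
    · have := hsupy_hom a (Sup' (fun w => hom w a))
      rw [← this]; exact hrefl _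
  -- D a w ≤ hom w a
  have hDle : ∀ a w : A, D a w ≤ hom w a := by
    intro a w
    apply le_of_one_le_qres
    have h := hDadj a (fun w => hom w a) (hylow a)
    rw [hsupy a] at h
    calc (1 : Q) ≤ hom a a := hrefl a
      _ = ⨅ z : A, qres (D a z) (hom z a) := h.symm
      _ ≤ qres (D a w) (hom w a) := iInf_le _ w
  -- sup (D a) = a
  have hsupD_hom : ∀ a t : A, hom (Sup' (D a)) t = hom a t := by
    intro a t
    have hle1 : (1 : Q) ≤ hom a (Sup' (D a)) := by
      rw [← hDadj a (D a) (hDlow a)]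
      exact le_iInf fun z => le_qres_iff.mpr (by rw [mul_one])
    apply le_antisymm
    · calc hom (Sup' (D a)) t = 1 * hom (Sup' (D a)) t := (one_mul _).symm
        _ ≤ hom a (Sup' (D a)) * hom (Sup' (D a)) t := qmul_mono_left _ hle1
        _ ≤ hom a t := htrans _ _ _
    · rw [← hSup (D a) (hDlow a)]
      exact le_iInf fun z => by
        rw [le_qres_iff]
        calc D a z * hom a t ≤ hom z a * hom a t := qmul_mono_left _ (hDle a z)
          _ ≤ hom z t := htrans _ _ _
  have hsupD : ∀ a : A, Sup' (D a) = a := by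
    intro a
    apply hanti
    · rw [hsupD_hom a a]; exact hrefl a
    · have := hsupD_hom a (Sup' (D a))
      rw [← this]; exact hrefl _
  -- functoriality: hom z x ≤ qres (D z w) (D x w)
  have hfunct : ∀ z x w : A, hom z x ≤ qres (D z w) (D x w) := by
    intro z x w
    have h := hDadj z (D x) (hDlow x)
    rw [hsupD x] at h
    calc hom z x = ⨅ w : A, qres (D z w) (D x w) := h.symm
      _ ≤ qres (D z w) (D x w) := iInf_le _ w
  intro x y
  set φ : A → Q := fun w => ⨆ z : A, D x z * D z w with hφ
  -- φ is lower
  have hφlow : IsLow φ := by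
    rw [hIsLow]
    intro a b
    rw [le_qres_iff, hφ]
    simp only
    rw [qiSup_mul]
    apply iSup_le
    intro z
    calc D x z * D z a * hom b a ≤ D x z * D z b := by
          rw [mul_assoc]
          apply qmul_mono_right
          have := (hIsLow (D z)).mp (hDlow z) a b
          rw [le_qres_iff] at this
          exact this
      _ ≤ ⨆ z : A, D x z * D z b := le_iSup (fun z : A => D x z * D z b) z
  -- sup φ = x
  have hsupφ_hom : ∀ t : A, hom (Sup' φ) t = hom x t := by
    intro t
    rw [← hSup φ hφlow]
    have step : ∀ w : A, qres (φ w) (hom w t) =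
        ⨅ z : A, qres (D x z) (qres (D z w) (hom w t)) := by
      intro w
      rw [hφ]
      simp only
      rw [qres_iSup]
      congr 1
      funext z
      rw [qres_mul]
    calc (⨅ w : A, qres (φ w) (hom w t))
        = ⨅ w : A, ⨅ z : A, qres (D x z) (qres (D z w) (hom w t)) := by
          exact iInf_congr step
      _ = ⨅ z : A, ⨅ w : A, qres (D x z) (qres (D z w) (hom w t)) := iInf_comm
      _ = ⨅ z : A, qres (D x z) (⨅ w : A, qres (D z w) (hom w t)) := by
          exact iInf_congr fun z => (qres_iInf _ _).symm
      _ = ⨅ z : A, qres (D x z) (hom (Sup' (D z)) t) := by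
          exact iInf_congr fun z => by rw [hSup (D z) (hDlow z)]
      _ = ⨅ z : A, qres (D x z) (hom z t) := by
          exact iInf_congr fun z => by rw [hsupD z]
      _ = hom (Sup' (D x)) t := hSup (D x) (hDlow x) t
      _ = hom x t := by rw [hsupD x]
  have hsupφ : Sup' φ = x := by
    apply hanti
    · rw [hsupφ_hom x]; exact hrefl x
    · have := hsupφ_hom (Sup' φ)
      rw [← this]; exact hrefl _
  apply le_antisymm
  · -- D x y ≤ φ y
    apply le_of_one_le_qres
    have h := hDadj x φ hφlow
    rw [hsupφ] at h
    calc (1 : Q) ≤ hom x x := hrefl x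
      _ = ⨅ z : A, qres (D x z) (φ z) := h.symm
      _ ≤ qres (D x y) (φ y) := iInf_le _ y
  · apply iSup_le
    intro z
    calc D x z * D z y ≤ hom z x * D z y := qmul_mono_left _ (hDle x z)
      _ = D z y * hom z x := mul_comm _ _
      _ ≤ D x y := le_qres_iff.mp (hfunct z x y)
end

section
/- Let Ω be an integral commutative quantale (unit I equals the top element 1). If the dual Ω-category Ωᵒᵖ is a complete Ω-Heyting algebra — equivalently, the infimum functor inf : [Ω, Ω]ᵒᵖ → Ω, inf ψ = ⋀_{t∈Ω}(ψ(t) → t), preserves tensors — then Ω is a Girard quantale: (α → 0) → 0 = α for all α ∈ Ω. In particular, inf(α → 0̲) = (α → 0) → 0 while preservation of tensors forces inf(α ⊗ 0̲) = α * inf 0̲ = α, where 0̲ is the constant functor at 0 and α ⊗ 0̲ in [Ω,Ω]ᵒᵖ is α → 0̲. -/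
lemma mul_bot' {Q : Type*} [CommQuantale Q] (a : Q) : a * ⊥ = ⊥ := by
  rw [← sSup_empty, CommQuantale.mul_sSup]; simp

lemma qres_bot_left {Q : Type*} [CommQuantale Q] (t : Q) : qres ⊥ t = ⊤ := by
  apply le_antisymm le_top
  apply le_sSup
  show (⊥ : Q) * ⊤ ≤ t
  rw [mul_comm, mul_bot']; exact bot_le

lemma qres_mono_right {Q : Type*} [CommQuantale Q] (a : Q) {s t : Q} (h : s ≤ t) :
    qres a s ≤ qres a t :=
  sSup_le_sSup fun c hc => le_trans hc h

/-- If Ω is integral and the infimum functor inf : [Ω,Ω]ᵒᵖ → Ω preserves tensors,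
then Ω is a Girard quantale. -/
theorem dual_heyting_implies_girard {Q : Type*} [CommQuantale Q]
    (hintegral : (1 : Q) = ⊤)
    (hpres : ∀ (α : Q) (ψ : Q → Q), (∀ a b : Q, qres a b ≤ qres (ψ a) (ψ b)) →
      (⨅ t : Q, qres (qres α (ψ t)) t) = α * ⨅ t : Q, qres (ψ t) t) :
    ∀ α : Q, qres (qres α ⊥) ⊥ = α := by
  intro α
  have h := hpres α (fun _ => ⊥) (fun a b => by simp [qres_bot_left])
  simp only [qres_bot_left] at h
  have h1 : (⨅ t : Q, qres (qres α ⊥) t) = qres (qres α ⊥) ⊥ :=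
    le_antisymm (iInf_le _ ⊥) (le_iInf fun t => qres_mono_right _ bot_le)
  have h2 : (⨅ _t : Q, (⊤ : Q)) = ⊤ := by simp
  rw [h1, h2, ← hintegral, mul_one] at h
  exact h
end
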